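/- For $a \in [1/\sqrt{2}, 1]$, the volume of $[-a,a]^3 \cap B_3(1)$ equals $\pi(6a - 2a^3 - 8/3)$. -/

import Mathlib

/-!
Since `2 a² ≥ 1`, a point of the closed unit ball `B` can leave the slab `|x i| ≤ a` for at most
one coordinate `i`, so `B` minus the cube is the disjoint union of the three caps `B \ slab i`.
Slicing `slab i ∩ B` perpendicular to the `i`-th axis into discs of radius `√(1 - t²)` gives
`vol (slab i ∩ B) = ∫_{-a}^{a} π (1 - t²) dt = π (2a - 2a³/3)`, hence the volume of the
intersection is `4π/3 - 3 (4π/3 - π (2a - 2a³/3)) = π (6a - 2a³ - 8/3)`.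
-/

open MeasureTheory Set Real Function

theorem measureReal_iInter_inter_of_pairwise_disjoint_sdiff {α ι : Type*} [MeasurableSpace α]
    [Fintype ι] {μ : Measure α} {B : Set α} {s : ι → Set α} (hB : MeasurableSet B)
    (hs : ∀ i, MeasurableSet (s i)) (hμB : μ B ≠ ⊤)
    (hd : Pairwise (Disjoint on (fun i => B \ s i))) :
    μ.real ((⋂ i, s i) ∩ B) = μ.real B - ∑ i, (μ.real B - μ.real (s i ∩ B)) := by
  have hcaps : μ.real (⋃ i, B \ s i) = ∑ i, μ.real (B \ s i) :=
    measureReal_iUnion_fintype hd (fun i => hB.diff (hs i))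
      (fun _ => measure_ne_top_of_subset sdiff_subset hμB)
  have hcap : ∀ i, μ.real (B \ s i) = μ.real B - μ.real (s i ∩ B) := fun i => by
    rw [inter_comm, ← measureReal_sdiff_add_inter (hs i) hμB, add_sub_cancel_right]
  have hset : (⋂ i, s i) ∩ B = B \ ⋃ i, B \ s i := by
    ext x
    simp only [mem_inter_iff, mem_iInter, mem_sdiff, mem_iUnion, not_exists, not_and, not_not]
    grind
  rw [hset, measureReal_sdiff (iUnion_subset fun _ => sdiff_subset)
    (MeasurableSet.iUnion fun i => hB.diff (hs i)) hμB, hcaps]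
  simp_rw [hcap]

theorem volume_setOf_sum_sq_le {ι : Type*} [Fintype ι] {r : ℝ} (hr : 0 ≤ r) :
    volume {x : ι → ℝ | ∑ i, x i ^ 2 ≤ r} =
      volume (Metric.closedBall (0 : EuclideanSpace ℝ ι) √r) := by
  rw [← (PiLp.volume_preserving_toLp ι).measure_preimage measurableSet_closedBall.nullMeasurableSet,
    EuclideanSpace.closedBall_zero_eq _ (sqrt_nonneg r), sq_sqrt hr]
  rfl

theorem volume_setOf_sum_sq_le_fin_two {r : ℝ} (hr : 0 ≤ r) :
    volume {x : Fin 2 → ℝ | ∑ i, x i ^ 2 ≤ r} = ENNReal.ofReal (π * r) := by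
  rw [volume_setOf_sum_sq_le hr, EuclideanSpace.volume_closedBall_fin_two,
    ← ENNReal.ofReal_pow (sqrt_nonneg r), sq_sqrt hr, ← ENNReal.ofReal_mul hr, mul_comm]

theorem volume_setOf_mem_and_sum_sq_le {n : ℕ} (i : Fin (n + 1)) {S : Set ℝ}
    (hS : MeasurableSet S) (r : ℝ) :
    volume {x : Fin (n + 1) → ℝ | x i ∈ S ∧ ∑ j, x j ^ 2 ≤ r} =
      ∫⁻ t in S, volume {y : Fin n → ℝ | ∑ j, y j ^ 2 ≤ r - t ^ 2} := by
  set e := MeasurableEquiv.piFinSuccAbove (fun _ : Fin (n + 1) => ℝ) i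
  have hsum (t : ℝ) (y : Fin n → ℝ) :
      ∑ j, (i.insertNth t y : Fin (n + 1) → ℝ) j ^ 2 = t ^ 2 + ∑ j, y j ^ 2 := by
    simp [Fin.sum_univ_succAbove _ i]
  have hT : MeasurableSet {p : ℝ × (Fin n → ℝ) | ∑ j, p.2 j ^ 2 ≤ r - p.1 ^ 2} :=
    measurableSet_le (by fun_prop) (by fun_prop)
  have hpre : e.symm ⁻¹' {x | x i ∈ S ∧ ∑ j, x j ^ 2 ≤ r} =
      {p : ℝ × (Fin n → ℝ) | ∑ j, p.2 j ^ 2 ≤ r - p.1 ^ 2} ∩ (S ×ˢ univ) := by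
    ext p
    simp [e, hsum, le_sub_iff_add_le', and_comm]
  rw [← (volume_preserving_piFinSuccAbove (fun _ => ℝ) i).symm.measure_preimage
    (by measurability), hpre, ← Measure.restrict_apply' (hS.prod MeasurableSet.univ),
    Measure.volume_eq_prod, ← Measure.restrict_prod_eq_prod_univ, Measure.prod_apply hT]
  rfl

theorem integral_one_sub_sq (b c : ℝ) :
    ∫ t in b..c, (1 - t ^ 2) = (c - c ^ 3 / 3) - (b - b ^ 3 / 3) := by
  rw [intervalIntegral.integral_sub intervalIntegrable_const
    (intervalIntegral.intervalIntegrable_pow 2), intervalIntegral.integral_const, integral_pow]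
  simp only [smul_eq_mul]
  ring

theorem volume_setOf_mem_Icc_inter_closedBall_fin_three (i : Fin 3) {b c : ℝ} (hb : -1 ≤ b)
    (hbc : b ≤ c) (hc : c ≤ 1) :
    volume ({x : EuclideanSpace ℝ (Fin 3) | x i ∈ Icc b c} ∩ Metric.closedBall 0 1) =
      ENNReal.ofReal (π * ((c - c ^ 3 / 3) - (b - b ^ 3 / 3))) := by
  have hsq : ∀ t ∈ Icc b c, 0 ≤ 1 - t ^ 2 := fun t ht => by
    nlinarith [ht.1, ht.2]
  rw [← (PiLp.volume_preserving_toLp (Fin 3)).measure_preimage (by measurability),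
    EuclideanSpace.closedBall_zero_eq _ zero_le_one, one_pow]
  change volume {x : Fin 3 → ℝ | x i ∈ Icc b c ∧ ∑ j, x j ^ 2 ≤ 1} = _
  rw [volume_setOf_mem_and_sum_sq_le i measurableSet_Icc,
    setLIntegral_congr_fun measurableSet_Icc
      (fun t ht => volume_setOf_sum_sq_le_fin_two (hsq t ht)),
    ← ofReal_integral_eq_lintegral_ofReal (by fun_prop : Continuous _).integrableOn_Icc
      ((ae_restrict_iff' measurableSet_Icc).2 (ae_of_all _ fun t ht =>
        mul_nonneg pi_pos.le (hsq t ht))),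
    integral_Icc_eq_integral_Ioc, ← intervalIntegral.integral_of_le hbc,
    intervalIntegral.integral_const_mul, integral_one_sub_sq]

theorem pairwise_disjoint_closedBall_sdiff_slab {ι : Type*} [Fintype ι] {a r : ℝ} (ha : 0 ≤ a)
    (hr : r ^ 2 ≤ 2 * a ^ 2) :
    Pairwise (Disjoint on fun i =>
      Metric.closedBall (0 : EuclideanSpace ℝ ι) r \ {x | x i ∈ Icc (-a) a}) := by
  have hsq : ∀ {s : ℝ}, s ∉ Icc (-a) a → a ^ 2 < s ^ 2 := fun hs => by
    rw [mem_Icc, not_and_or, not_le, not_le] at hs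
    rcases hs with hs | hs <;> nlinarith
  intro i j hij
  refine disjoint_left.2 fun x ⟨hx, hi⟩ ⟨_, hj⟩ => ?_
  have hnorm : ‖x‖ ^ 2 ≤ r ^ 2 :=
    pow_le_pow_left₀ (norm_nonneg x) (mem_closedBall_zero_iff.1 hx) 2
  classical
  have hpair : x i ^ 2 + x j ^ 2 ≤ ‖x‖ ^ 2 := by
    rw [EuclideanSpace.real_norm_sq_eq, ← Finset.sum_pair hij (f := fun k => x k ^ 2)]
    exact Finset.sum_le_sum_of_subset_of_nonneg (Finset.subset_univ _)
      fun k _ _ => sq_nonneg (x k)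
  linarith [hsq hi, hsq hj]

theorem stmt_13 (a : ℝ) (h0 : 1 / Real.sqrt 2 ≤ a) (h1 : a ≤ 1) :
    volume ({x : EuclideanSpace ℝ (Fin 3) | ∀ i, x i ∈ Icc (-a) a}
        ∩ Metric.closedBall (0 : EuclideanSpace ℝ (Fin 3)) 1)
      = ENNReal.ofReal (π * (6 * a - 2 * a ^ 3 - 8 / 3)) := by
  have ha : 0 ≤ a := le_trans (by positivity) h0
  have h2a : (1 : ℝ) ^ 2 ≤ 2 * a ^ 2 := by
    have := pow_le_pow_left₀ (by positivity) h0 2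
    rw [div_pow, sq_sqrt zero_le_two] at this
    linarith
  have hslab (i : Fin 3) :
      volume.real ({x : EuclideanSpace ℝ (Fin 3) | x i ∈ Icc (-a) a} ∩ Metric.closedBall 0 1) =
        π * ((a - a ^ 3 / 3) - (-a - (-a) ^ 3 / 3)) := by
    rw [measureReal_def, volume_setOf_mem_Icc_inter_closedBall_fin_three i (by linarith)
      (by linarith) h1, ENNReal.toReal_ofReal]
    exact mul_nonneg pi_pos.le (by nlinarith)
  have hball : volume.real (Metric.closedBall (0 : EuclideanSpace ℝ (Fin 3)) 1) = π * 4 / 3 := by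
    rw [measureReal_def, EuclideanSpace.volume_closedBall_fin_three, ENNReal.ofReal_one, one_pow,
      one_mul, ENNReal.toReal_ofReal (by positivity)]
  have hfin : volume (Metric.closedBall (0 : EuclideanSpace ℝ (Fin 3)) 1) ≠ ⊤ :=
    measure_closedBall_lt_top.ne
  rw [ofPred_forall, ← ofReal_measureReal (measure_ne_top_of_subset inter_subset_right hfin),
    measureReal_iInter_inter_of_pairwise_disjoint_sdiff measurableSet_closedBall
    (fun i => by measurability) hfin
    (pairwise_disjoint_closedBall_sdiff_slab ha h2a)]
  simp only [hslab, hball, Finset.sum_const, Finset.card_univ, Fintype.card_fin]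
  congr 1
  ring
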